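/- arXiv:1004.3158 — 3 statements merged into one kernel-verified Lean document; each statement's English description precedes it below -/
import Mathlib

section
/- Let (V, E, s, t) be a finite graph with 1-chains C₁ = (E → ZMod 2), boundary ∂ : C₁ → C₀, and cycle space Z₁ = ker ∂. Fix ξ ∈ Z₁ and a subset Y ⊆ E with Y ∩ |ξ| = ∅, let c_Y be the indicator chain of Y, and let Z(ξ,Y) = {(ξ₁,ξ₂) ∈ Z₁ × Z₁ : ξ₁ + ξ₂ = ξ and |ξ₁| ∩ |ξ₂| = Y}. Then the map (ξ₁,ξ₂) ↦ ξ₁ + c_Y is a bijection from Z(ξ,Y) onto the set {c ∈ C₁ : |c| ⊆ |ξ| and ∂c = ∂c_Y}, with inverse c ↦ (c + c_Y, c + c_Y + ξ). -/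
open scoped BigOperators

/-- The boundary map `∂ : C₁ → C₀` of a finite graph `(V, E, s, t)`:
the `ZMod 2`-linear map sending the indicator chain of an edge `e` to
(indicator of `s e`) + (indicator of `t e`). -/
def bdry {V E : Type*} [Fintype E] [DecidableEq V]
    (s t : E → V) (ξ : E → ZMod 2) : V → ZMod 2 :=
  fun v => ∑ e, ξ e * ((if s e = v then 1 else 0) + (if t e = v then 1 else 0))

/-- The support of a 1-chain: the set of edges where it equals 1. -/
def chainSupp {E : Type*} [Fintype E] (ξ : E → ZMod 2) : Finset E :=
  Finset.univ.filter (fun e => ξ e = 1)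

lemma bdry_add {V E : Type*} [Fintype E] [DecidableEq V]
    (s t : E → V) (a b : E → ZMod 2) :
    bdry s t (a + b) = bdry s t a + bdry s t b := by
  funext v
  simp [bdry, add_mul, Finset.sum_add_distrib]

lemma mem_chainSupp {E : Type*} [Fintype E] {ξ : E → ZMod 2} {e : E} :
    e ∈ chainSupp ξ ↔ ξ e = 1 := by
  simp [chainSupp]

lemma zmod2_cases : ∀ x : ZMod 2, x = 0 ∨ x = 1 := by decide

theorem cycle_pairs_biject_with_chains
    {V E : Type*} [Fintype V] [Fintype E] [DecidableEq V] [DecidableEq E]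
    (s t : E → V)
    (ξ : E → ZMod 2) (hξ : bdry s t ξ = 0)
    (Y : Finset E) (hY : Y ∩ chainSupp ξ = ∅)
    (cY : E → ZMod 2) (hcY : ∀ e, cY e = if e ∈ Y then 1 else 0) :
    Set.BijOn (fun p : (E → ZMod 2) × (E → ZMod 2) => p.1 + cY)
      {p : (E → ZMod 2) × (E → ZMod 2) |
        bdry s t p.1 = 0 ∧ bdry s t p.2 = 0 ∧ p.1 + p.2 = ξ ∧
          chainSupp p.1 ∩ chainSupp p.2 = Y}
      {c : E → ZMod 2 | chainSupp c ⊆ chainSupp ξ ∧ bdry s t c = bdry s t cY} ∧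
    Set.InvOn (fun c : E → ZMod 2 => (c + cY, c + cY + ξ))
      (fun p : (E → ZMod 2) × (E → ZMod 2) => p.1 + cY)
      {p : (E → ZMod 2) × (E → ZMod 2) |
        bdry s t p.1 = 0 ∧ bdry s t p.2 = 0 ∧ p.1 + p.2 = ξ ∧
          chainSupp p.1 ∩ chainSupp p.2 = Y}
      {c : E → ZMod 2 | chainSupp c ⊆ chainSupp ξ ∧ bdry s t c = bdry s t cY} ∧
    Set.MapsTo (fun c : E → ZMod 2 => (c + cY, c + cY + ξ))
      {c : E → ZMod 2 | chainSupp c ⊆ chainSupp ξ ∧ bdry s t c = bdry s t cY}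
      {p : (E → ZMod 2) × (E → ZMod 2) |
        bdry s t p.1 = 0 ∧ bdry s t p.2 = 0 ∧ p.1 + p.2 = ξ ∧
          chainSupp p.1 ∩ chainSupp p.2 = Y} := by

  have hξ0 : ∀ e, e ∈ Y → ξ e = 0 := by
    intro e he
    rcases zmod2_cases (ξ e) with h | h
    · exact h
    · exact absurd (Finset.mem_inter.mpr ⟨he, mem_chainSupp.mpr h⟩)
        (by simp [hY])
  -- maps-to for g
  have hg : Set.MapsTo (fun c : E → ZMod 2 => (c + cY, c + cY + ξ))
      {c : E → ZMod 2 | chainSupp c ⊆ chainSupp ξ ∧ bdry s t c = bdry s t cY}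
      {p : (E → ZMod 2) × (E → ZMod 2) |
        bdry s t p.1 = 0 ∧ bdry s t p.2 = 0 ∧ p.1 + p.2 = ξ ∧
          chainSupp p.1 ∩ chainSupp p.2 = Y} := by
    rintro c ⟨hsupp, hbd⟩
    have h1 : bdry s t (c + cY) = 0 := by
      rw [bdry_add, hbd]
      funext v
      simp [CharTwo.add_self_eq_zero]
    refine ⟨h1, ?_, ?_, ?_⟩
    · rw [bdry_add, h1, hξ]; simp
    · funext e
      simp only [Pi.add_apply]
      rw [← add_assoc (c e + cY e), CharTwo.add_self_eq_zero, zero_add]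
    · ext e
      simp only [Finset.mem_inter, mem_chainSupp, Pi.add_apply]
      by_cases he : e ∈ Y
      · have hce : c e = 0 := by
          rcases zmod2_cases (c e) with h | h
          · exact h
          · exact absurd (mem_chainSupp.mp (hsupp (mem_chainSupp.mpr h)))
              (by simp [hξ0 e he])
        simp [hcY e, he, hce, hξ0 e he]
      · have hcYe : cY e = 0 := by simp [hcY e, he]
        rcases zmod2_cases (c e) with h | h
        · simp [hcYe, h, he]
        · have hξe : ξ e = 1 := mem_chainSupp.mp (hsupp (mem_chainSupp.mpr h))
          simp [hcYe, h, hξe, he]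
  -- maps-to for f
  have hf : Set.MapsTo (fun p : (E → ZMod 2) × (E → ZMod 2) => p.1 + cY)
      {p : (E → ZMod 2) × (E → ZMod 2) |
        bdry s t p.1 = 0 ∧ bdry s t p.2 = 0 ∧ p.1 + p.2 = ξ ∧
          chainSupp p.1 ∩ chainSupp p.2 = Y}
      {c : E → ZMod 2 | chainSupp c ⊆ chainSupp ξ ∧ bdry s t c = bdry s t cY} := by
    rintro ⟨p1, p2⟩ ⟨h1, h2, hsum, hint⟩
    constructor
    · intro e he
      rw [mem_chainSupp] at he ⊢
      simp only [Pi.add_apply] at he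
      by_cases hY' : e ∈ Y
      · have hp1 : p1 e = 1 := by
          have := hint ▸ hY'
          exact (mem_chainSupp.mp (Finset.mem_inter.mp this).1)
        rw [hp1, hcY e, if_pos hY'] at he
        exact absurd he (by decide)
      · have hcYe : cY e = 0 := by simp [hcY e, hY']
        rw [hcYe, add_zero] at he
        have hp2 : p2 e = 0 := by
          rcases zmod2_cases (p2 e) with h | h
          · exact h
          · exact absurd (hint ▸ Finset.mem_inter.mpr
              ⟨mem_chainSupp.mpr he, mem_chainSupp.mpr h⟩) hY'
        have := congrFun hsum e
        simp only [Pi.add_apply] at this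
        rw [he, hp2, add_zero] at this
        exact this.symm
    · rw [bdry_add, h1]; simp
  have hinv : Set.InvOn (fun c : E → ZMod 2 => (c + cY, c + cY + ξ))
      (fun p : (E → ZMod 2) × (E → ZMod 2) => p.1 + cY)
      {p : (E → ZMod 2) × (E → ZMod 2) |
        bdry s t p.1 = 0 ∧ bdry s t p.2 = 0 ∧ p.1 + p.2 = ξ ∧
          chainSupp p.1 ∩ chainSupp p.2 = Y}
      {c : E → ZMod 2 | chainSupp c ⊆ chainSupp ξ ∧ bdry s t c = bdry s t cY} := by
    constructor
    · rintro ⟨p1, p2⟩ ⟨h1, h2, hsum, hint⟩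
      simp only
      have e1 : p1 + cY + cY = p1 := by
        funext e
        simp only [Pi.add_apply]
        rw [add_assoc, CharTwo.add_self_eq_zero, add_zero]
      rw [e1]
      have e2 : p1 + ξ = p2 := by
        rw [← hsum]
        funext e
        simp only [Pi.add_apply]
        rw [← add_assoc, CharTwo.add_self_eq_zero, zero_add]
      rw [e2]
    · rintro c _
      simp only
      funext e
      simp only [Pi.add_apply]
      rw [add_assoc, CharTwo.add_self_eq_zero, add_zero]
  exact ⟨hinv.bijOn hf hg, hinv, hg⟩
end

section
/- Let W be a finite-dimensional vector space over ZMod 2 and B : W → W → ZMod 2 a nondegenerate alternating bilinear form. Let Q be the set of all quadratic refinements of B. Then for every α ∈ W, one has the integer identity Σ_{q ∈ Q} Σ_{β ∈ W} χ(q β + q α) = card W. (Equivalently, writing dim W = 2g, card W = 2^{2g} and 2^{−g}·Σ_{β∈W} χ(q β) = (−1)^{Arf(q)}: for every α, 2^{−g} Σ_{q∈Q} (−1)^{Arf(q)} (−1)^{q(α)} = 1. This is equation (1) of the paper.) -/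
open scoped BigOperators

/-- The sign character `χ : ZMod 2 → ℤ`, `χ 0 = 1`, `χ 1 = -1`. -/
def chi : ZMod 2 → ℤ := fun x => if x = 0 then 1 else -1

open Finset

/-! Fix one quadratic refinement `q₀`; the others are the `q₀ + ℓ` with `ℓ` additive. Such a `q₀`
exists because in characteristic 2 an alternating form is `B' + B'ᵀ` for its strictly
upper-triangular part `B'` in an ordered basis, so `x ↦ B' x x` refines it. Since
`χ((q₀ + ℓ) β + (q₀ + ℓ) α) = χ(q₀ β + q₀ α) χ(ℓ (β + α))`, summing over `ℓ` first and using the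
orthogonality of the characters `χ ∘ ℓ` leaves only `β = α`, which contributes
`χ(q₀ α + q₀ α) · #W = #W`. -/

namespace LinearMap.IsAlt

variable {R M : Type*} [CommRing R] [AddCommGroup M] [Module R M] [Module.Free R M]
  [Module.Finite R M] {B : M →ₗ[R] M →ₗ[R] R}

theorem exists_sub_flip_eq (hB : B.IsAlt) : ∃ B' : M →ₗ[R] M →ₗ[R] R, B' - B'.flip = B := by
  let ι := Module.Free.ChooseBasisIndex R M
  let b := Module.Free.chooseBasis R M
  let _ : LinearOrder ι := LinearOrder.lift' (Fintype.equivFin ι) (Fintype.equivFin ι).injective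
  refine ⟨Matrix.toLinearMap₂ b b (.of fun i j => if i < j then B (b i) (b j) else 0),
    LinearMap.ext_basis b b fun i j => ?_⟩
  simp only [sub_apply, flip_apply, Matrix.toLinearMap₂_apply_basis, Matrix.of_apply]
  rcases lt_trichotomy i j with h | rfl | h
  · rw [if_pos h, if_neg h.not_gt, sub_zero]
  · rw [if_neg (lt_irrefl i), sub_zero, hB]
  · rw [if_neg h.not_gt, if_pos h, zero_sub, hB.neg]

theorem exists_polarBilin_eq [CharP R 2] (hB : B.IsAlt) :
    ∃ Q : QuadraticForm R M, Q.polarBilin = B := by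
  obtain ⟨B', rfl⟩ := hB.exists_sub_flip_eq
  refine ⟨LinearMap.BilinMap.toQuadraticMap B', ?_⟩
  rw [LinearMap.BilinMap.polarBilin_toQuadraticMap]
  ext x y
  simp [CharTwo.sub_eq_add]

end LinearMap.IsAlt

theorem exists_quadratic_refinement {W : Type*} [AddCommGroup W] [Module (ZMod 2) W]
    [Module.Finite (ZMod 2) W] {B : W → W → ZMod 2}
    (hB₁ : ∀ x y z : W, B (x + y) z = B x z + B y z)
    (hB₂ : ∀ x y z : W, B z (x + y) = B z x + B z y) (hBalt : ∀ x : W, B x x = 0) :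
    ∃ q : W → ZMod 2, ∀ x y : W, q (x + y) = q x + q y + B x y := by
  let B₂ : W →ₗ[ZMod 2] W →ₗ[ZMod 2] ZMod 2 := LinearMap.mk₂ (ZMod 2) B hB₁
    (fun c x y => ZMod.map_smul (AddMonoidHom.mk' (B · y) (hB₁ · · y)) c x)
    (fun x y z => hB₂ y z x) (fun c x y => ZMod.map_smul (AddMonoidHom.mk' (B x) (hB₂ · · x)) c y)
  obtain ⟨Q, hQ⟩ := LinearMap.IsAlt.exists_polarBilin_eq (B := B₂) hBalt
  refine ⟨Q, fun x y => ?_⟩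
  have hxy : Q (x + y) - Q x - Q y = B x y := LinearMap.congr_fun₂ hQ x y
  linear_combination hxy

section Refinements

variable {W R : Type*} [AddCommGroup W] [Fintype W] [DecidableEq W] [AddCommGroup R] [Fintype R]
  [DecidableEq R]

/-- The refinements of the zero form are the additive maps `W → R`. -/
def quadraticRefinements (B : W → W → R) : Finset (W → R) :=
  univ.filter fun q => ∀ x y, q (x + y) = q x + q y + B x y

@[simp]
theorem mem_quadraticRefinements {B : W → W → R} {q : W → R} :
    q ∈ quadraticRefinements B ↔ ∀ x y, q (x + y) = q x + q y + B x y := by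
  simp [quadraticRefinements]

theorem sum_quadraticRefinements_eq {M : Type*} [AddCommMonoid M] {B : W → W → R} {q₀ : W → R}
    (hq₀ : q₀ ∈ quadraticRefinements B) (f : (W → R) → M) :
    ∑ q ∈ quadraticRefinements B, f q = ∑ ℓ ∈ quadraticRefinements 0, f (q₀ + ℓ) := by
  rw [mem_quadraticRefinements] at hq₀
  refine (sum_nbij' (q₀ + ·) (-q₀ + ·) ?_ ?_ (fun _ _ => neg_add_cancel_left _ _)
    (fun _ _ => add_neg_cancel_left _ _) fun _ _ => rfl).symm
  · intro ℓ hℓ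
    simp only [mem_quadraticRefinements, Pi.add_apply, Pi.zero_apply, add_zero] at hℓ ⊢
    intro x y
    rw [hq₀, hℓ]
    abel
  · intro q hq
    simp only [mem_quadraticRefinements, Pi.add_apply, Pi.neg_apply, Pi.zero_apply,
      add_zero] at hq ⊢
    intro x y
    rw [hq₀, hq]
    abel

theorem card_quadraticRefinements_zero {p : ℕ} [Fact p.Prime] [Module (ZMod p) W] :
    #(quadraticRefinements (0 : W → W → ZMod p)) = Fintype.card W := by
  let e : quadraticRefinements (0 : W → W → ZMod p) ≃ Module.Dual (ZMod p) W :=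
    { toFun ℓ := (AddMonoidHom.mk' ℓ.1 fun x y => by
        simpa using mem_quadraticRefinements.1 ℓ.2 x y).toZModLinearMap p
      invFun f := ⟨f, by simp⟩
      left_inv _ := rfl
      right_inv _ := rfl }
  rw [← Nat.card_eq_finsetCard, Nat.card_congr e, ← Nat.card_eq_fintype_card,
    Nat.card_congr (Module.finBasis (ZMod p) W).toDualEquiv.toEquiv]

end Refinements

theorem chi_add (a b : ZMod 2) : chi (a + b) = chi a * chi b := by
  revert a b
  decide

theorem chi_one_add (a : ZMod 2) : chi (1 + a) = -chi a := by
  revert a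
  decide

theorem sum_chi_apply_eq_ite {W : Type*} [AddCommGroup W] [Module (ZMod 2) W] [Fintype W]
    [DecidableEq W] (v : W) :
    ∑ ℓ ∈ quadraticRefinements (0 : W → W → ZMod 2), chi (ℓ v) =
      if v = 0 then (Fintype.card W : ℤ) else 0 := by
  split_ifs with hv
  · subst hv
    have hℓ0 : ∀ ℓ ∈ quadraticRefinements (0 : W → W → ZMod 2), chi (ℓ 0) = 1 := by
      intro ℓ hℓ
      have h := (mem_quadraticRefinements.1 hℓ) 0 0
      simp only [add_zero, Pi.zero_apply, left_eq_add] at h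
      simp [h, chi]
    rw [sum_congr rfl hℓ0, sum_const, card_quadraticRefinements_zero, nsmul_one]
  · obtain ⟨f, hf⟩ : ∃ f : Module.Dual (ZMod 2) W, f v ≠ 0 := by
      by_contra! h
      exact hv ((Module.forall_dual_apply_eq_zero_iff (ZMod 2) v).1 h)
    have hf1 : f v = 1 := Fin.eq_one_of_ne_zero _ hf
    have hfmem : ⇑f ∈ quadraticRefinements (0 : W → W → ZMod 2) := by simp
    have hshift := sum_quadraticRefinements_eq hfmem fun ℓ => chi (ℓ v)
    simp only [Pi.add_apply, hf1, chi_one_add, sum_neg_distrib] at hshift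
    linarith

theorem sum_over_quadratic_refinements_general
    {W : Type*} [AddCommGroup W] [Module (ZMod 2) W] [Fintype W] [DecidableEq W]
    (B : W → W → ZMod 2)
    (hB₁ : ∀ x y z : W, B (x + y) z = B x z + B y z)
    (hB₂ : ∀ x y z : W, B z (x + y) = B z x + B z y)
    (hBalt : ∀ x : W, B x x = 0)
    (α : W) :
    (∑ q ∈ Finset.univ.filter
        (fun q : W → ZMod 2 => ∀ x y : W, q (x + y) = q x + q y + B x y),
      ∑ β : W, chi (q β + q α)) = Fintype.card W := by
  obtain ⟨q₀, hq₀⟩ := exists_quadratic_refinement hB₁ hB₂ hBalt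
  have hsplit : ∀ ℓ ∈ quadraticRefinements (0 : W → W → ZMod 2), ∀ β,
      chi ((q₀ + ℓ) β + (q₀ + ℓ) α) = chi (q₀ β + q₀ α) * chi (ℓ (β + α)) := by
    intro ℓ hℓ β
    rw [mem_quadraticRefinements.1 hℓ β α, ← chi_add]
    simp only [Pi.add_apply, Pi.zero_apply, add_zero]
    abel_nf
  calc _ = ∑ ℓ ∈ quadraticRefinements (0 : W → W → ZMod 2),
          ∑ β, chi ((q₀ + ℓ) β + (q₀ + ℓ) α) :=
        sum_quadraticRefinements_eq (mem_quadraticRefinements.2 hq₀) _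
    _ = ∑ β, chi (q₀ β + q₀ α) *
          ∑ ℓ ∈ quadraticRefinements (0 : W → W → ZMod 2), chi (ℓ (β + α)) := by
        rw [sum_comm]
        refine sum_congr rfl fun β _ => ?_
        rw [mul_sum]
        exact sum_congr rfl fun ℓ hℓ => hsplit ℓ hℓ β
    _ = ∑ β, chi (q₀ β + q₀ α) * if β = α then (Fintype.card W : ℤ) else 0 := by
        simp_rw [sum_chi_apply_eq_ite, ← ZModModule.sub_eq_add, sub_eq_zero]
    _ = Fintype.card W := by simp [CharTwo.add_self_eq_zero, chi]

theorem sum_over_quadratic_refinements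
    {W : Type*} [AddCommGroup W] [Module (ZMod 2) W] [Fintype W] [DecidableEq W]
    (B : W → W → ZMod 2)
    (hB₁ : ∀ x y z : W, B (x + y) z = B x z + B y z)
    (hB₂ : ∀ x y z : W, B z (x + y) = B z x + B z y)
    (hBalt : ∀ x : W, B x x = 0)
    (hBnd : ∀ x : W, (∀ y : W, B x y = 0) → x = 0)
    (α : W) :
    (∑ q ∈ Finset.univ.filter
        (fun q : W → ZMod 2 => ∀ x y : W, q (x + y) = q x + q y + B x y),
      ∑ β : W, chi (q β + q α)) = Fintype.card W :=
  sum_over_quadratic_refinements_general B hB₁ hB₂ hBalt α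
end

section
/- Let n be an even positive integer and let L be the n × n integer matrix (indices 0 ≤ i, j < n) defined by L i j = 0 if i = j, L i j = (−1)^{i+j+1} if i < j, and L i j = (−1)^{i+j} if i > j (so L is skew-symmetric with rows 0, 1, −1, 1, …, 1; −1, 0, 1, −1, …, −1; etc., as in the proof of Proposition 4.4). Then det L = 1, and L is invertible with inverse the matrix M given by M i j = −1 if i < j, M i j = 1 if i > j, and M i j = 0 if i = j; that is, L · M = M · L = identity. -/
open Finset

private def mfun (i j : ℕ) : ℤ :=
  if i < j then -1 else if i = j then 0 else 1

private def lfun (i j : ℕ) : ℤ :=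
  if i = j then 0 else if i < j then (-1) ^ (i + j + 1) else (-1) ^ (i + j)

private lemma sumE (m : ℕ) :
    ∑ k ∈ range m, (-1 : ℤ) ^ k = if Even m then 0 else 1 := by
  induction m with
  | zero => simp
  | succ m ih =>
    rw [Finset.sum_range_succ, ih]
    rcases Nat.even_or_odd m with h | h
    · rw [if_pos h, if_neg (by simp [Nat.even_add_one, h]), h.neg_one_pow]
      norm_num
    · rw [if_neg (Nat.not_even_iff_odd.mpr h), if_pos (h.add_one), h.neg_one_pow]
      norm_num

private lemma sumE_Ico (a b : ℕ) (h : a ≤ b) :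
    ∑ k ∈ Ico a b, (-1 : ℤ) ^ k =
      (if Even b then 0 else 1) - (if Even a then 0 else 1) := by
  rw [Finset.sum_Ico_eq_sub _ h, sumE, sumE]

private lemma key_diag (n i : ℕ) (hn : Even n) (hi : i < n) :
    ∑ k ∈ range n, mfun i k * lfun k i = 1 := by
  have hpt : ∀ k, mfun i k * lfun k i
      = (-1 : ℤ) ^ (k + i + 1) + (if k = i then 1 else 0) := by
    intro k
    have hp : ∀ m : ℕ, (-1 : ℤ) ^ (m + 1) = -(-1 : ℤ) ^ m := fun m => by rw [pow_succ]; ring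
    have he : ∀ m : ℕ, (-1 : ℤ) ^ (m + m) = 1 := fun m => Even.neg_one_pow ⟨m, rfl⟩
    simp only [mfun, lfun, Finset.mem_Ico]
    split_ifs <;> first | (exfalso; omega) | (subst_vars; simp only [hp, he]; ring)
  rw [Finset.sum_congr rfl fun k _ => hpt k, Finset.sum_add_distrib]
  have h1 : ∑ k ∈ range n, (-1 : ℤ) ^ (k + i + 1)
      = (∑ k ∈ range n, (-1 : ℤ) ^ k) * (-1) ^ (i + 1) := by
    rw [Finset.sum_mul]
    exact Finset.sum_congr rfl fun k _ => by rw [← pow_add, ← add_assoc]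
  rw [h1, sumE, if_pos hn, Finset.sum_ite_eq' (range n) i (fun _ => (1 : ℤ)),
    if_pos (Finset.mem_range.mpr hi)]
  ring

private lemma parity_eval_lt (a b : ℕ) :
    (-1 : ℤ) ^ (a + b) + 2 * (-1 : ℤ) ^ b *
      ((if Even b then 0 else 1) - (if Even (a + 1) then 0 else 1)) + 1 = 0 := by
  rcases Nat.even_or_odd a with ha | ha <;> rcases Nat.even_or_odd b with hb | hb
  · rw [if_pos hb, if_neg (Nat.not_even_iff_odd.mpr ha.add_one), pow_add,
      ha.neg_one_pow, hb.neg_one_pow]; norm_num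
  · rw [if_neg (Nat.not_even_iff_odd.mpr hb), if_neg (Nat.not_even_iff_odd.mpr ha.add_one),
      pow_add, ha.neg_one_pow, hb.neg_one_pow]; norm_num
  · rw [if_pos hb, if_pos ha.add_one, pow_add, ha.neg_one_pow, hb.neg_one_pow]; norm_num
  · rw [if_neg (Nat.not_even_iff_odd.mpr hb), if_pos ha.add_one, pow_add,
      ha.neg_one_pow, hb.neg_one_pow]; norm_num

private lemma parity_eval_gt (a b : ℕ) :
    (-1 : ℤ) ^ (a + b) + 2 * (-1 : ℤ) ^ b *
      ((if Even a then 0 else 1) - (if Even (b + 1) then 0 else 1)) + 1 = 0 := by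
  rcases Nat.even_or_odd a with ha | ha <;> rcases Nat.even_or_odd b with hb | hb
  · rw [if_pos ha, if_neg (Nat.not_even_iff_odd.mpr hb.add_one), pow_add,
      ha.neg_one_pow, hb.neg_one_pow]; norm_num
  · rw [if_pos ha, if_pos hb.add_one, pow_add, ha.neg_one_pow, hb.neg_one_pow]; norm_num
  · rw [if_neg (Nat.not_even_iff_odd.mpr ha), if_neg (Nat.not_even_iff_odd.mpr hb.add_one),
      pow_add, ha.neg_one_pow, hb.neg_one_pow]; norm_num
  · rw [if_neg (Nat.not_even_iff_odd.mpr ha), if_pos hb.add_one, pow_add,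
      ha.neg_one_pow, hb.neg_one_pow]; norm_num

private lemma sum_indicator_Ico (n a b t : ℕ) (hb : b ≤ n) :
    ∑ k ∈ range n, (if k ∈ Ico a b then 2 * (-1 : ℤ) ^ (k + t) else 0)
      = 2 * (-1 : ℤ) ^ t * ∑ k ∈ Ico a b, (-1 : ℤ) ^ k := by
  rw [Finset.sum_ite_mem]
  have : range n ∩ Ico a b = Ico a b := by
    apply Finset.inter_eq_right.mpr
    intro x hx
    simp only [Finset.mem_Ico] at hx
    exact Finset.mem_range.mpr (lt_of_lt_of_le hx.2 hb)
  rw [this, Finset.mul_sum]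
  exact Finset.sum_congr rfl fun k _ => by rw [pow_add]; ring

private lemma key_lt (n i j : ℕ) (hn : Even n) (hj : j < n) (hij : i < j) :
    ∑ k ∈ range n, mfun i k * lfun k j = 0 := by
  have hpt : ∀ k, mfun i k * lfun k j
      = (-1 : ℤ) ^ (k + j + 1) + (if k = i then (-1 : ℤ) ^ (i + j) else 0)
        + (if k ∈ Ico (i + 1) j then 2 * (-1 : ℤ) ^ (k + j) else 0)
        + (if k = j then 1 else 0) := by
    intro k
    have hp : ∀ m : ℕ, (-1 : ℤ) ^ (m + 1) = -(-1 : ℤ) ^ m := fun m => by rw [pow_succ]; ring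
    have he : ∀ m : ℕ, (-1 : ℤ) ^ (m + m) = 1 := fun m => Even.neg_one_pow ⟨m, rfl⟩
    simp only [mfun, lfun, Finset.mem_Ico]
    split_ifs <;> first | (exfalso; omega) | (subst_vars; simp only [hp, he]; ring)
  rw [Finset.sum_congr rfl fun k _ => hpt k]
  rw [Finset.sum_add_distrib, Finset.sum_add_distrib, Finset.sum_add_distrib]
  have h1 : ∑ k ∈ range n, (-1 : ℤ) ^ (k + j + 1)
      = (∑ k ∈ range n, (-1 : ℤ) ^ k) * (-1) ^ (j + 1) := by
    rw [Finset.sum_mul]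
    exact Finset.sum_congr rfl fun k _ => by rw [← pow_add, ← add_assoc]
  rw [h1, sumE, if_pos hn,
    Finset.sum_ite_eq' (range n) i (fun _ => (-1 : ℤ) ^ (i + j)),
    if_pos (Finset.mem_range.mpr (hij.trans hj)),
    Finset.sum_ite_eq' (range n) j (fun _ => (1 : ℤ)),
    if_pos (Finset.mem_range.mpr hj),
    sum_indicator_Ico n (i + 1) j j (le_of_lt hj), sumE_Ico _ _ (Nat.succ_le_of_lt hij)]
  have := parity_eval_lt i j
  linarith [this]

private lemma key_gt (n i j : ℕ) (hn : Even n) (hi : i < n) (hij : j < i) :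
    ∑ k ∈ range n, mfun i k * lfun k j = 0 := by
  have hpt : ∀ k, mfun i k * lfun k j
      = (-1 : ℤ) ^ (k + j + 1) + (if k = j then 1 else 0)
        + (if k ∈ Ico (j + 1) i then 2 * (-1 : ℤ) ^ (k + j) else 0)
        + (if k = i then (-1 : ℤ) ^ (i + j) else 0) := by
    intro k
    have hp : ∀ m : ℕ, (-1 : ℤ) ^ (m + 1) = -(-1 : ℤ) ^ m := fun m => by rw [pow_succ]; ring
    have he : ∀ m : ℕ, (-1 : ℤ) ^ (m + m) = 1 := fun m => Even.neg_one_pow ⟨m, rfl⟩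
    simp only [mfun, lfun, Finset.mem_Ico]
    split_ifs <;> first | (exfalso; omega) | (subst_vars; simp only [hp, he]; ring)
  rw [Finset.sum_congr rfl fun k _ => hpt k]
  rw [Finset.sum_add_distrib, Finset.sum_add_distrib, Finset.sum_add_distrib]
  have h1 : ∑ k ∈ range n, (-1 : ℤ) ^ (k + j + 1)
      = (∑ k ∈ range n, (-1 : ℤ) ^ k) * (-1) ^ (j + 1) := by
    rw [Finset.sum_mul]
    exact Finset.sum_congr rfl fun k _ => by rw [← pow_add, ← add_assoc]
  rw [h1, sumE, if_pos hn,
    Finset.sum_ite_eq' (range n) j (fun _ => (1 : ℤ)),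
    if_pos (Finset.mem_range.mpr (hij.trans hi)),
    Finset.sum_ite_eq' (range n) i (fun _ => (-1 : ℤ) ^ (i + j)),
    if_pos (Finset.mem_range.mpr hi),
    sum_indicator_Ico n (j + 1) i j (le_of_lt hi), sumE_Ico _ _ (Nat.succ_le_of_lt hij)]
  have := parity_eval_gt i j
  linarith [this]

private def blockEquiv (c : ℕ) : Fin 2 ⊕ Fin (c + c) ≃ Fin ((c + 1) + (c + 1)) :=
  finSumFinEquiv.trans (finCongr (by omega))

private lemma blockEquiv_inl (c : ℕ) (a : Fin 2) :
    ((blockEquiv c (Sum.inl a)) : ℕ) = (a : ℕ) := rfl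

private lemma blockEquiv_inr (c : ℕ) (a : Fin (c + c)) :
    ((blockEquiv c (Sum.inr a)) : ℕ) = 2 + (a : ℕ) := rfl

private lemma detM_aux : ∀ c : ℕ,
    (Matrix.of fun i j : Fin (c + c) => mfun (i : ℕ) (j : ℕ)).det = 1 := by
  intro c
  induction c with
  | zero => exact Matrix.det_fin_zero
  | succ c ih =>
    letI : Invertible (!![0, -1; 1, 0] : Matrix (Fin 2) (Fin 2) ℤ) :=
      ⟨!![0, 1; -1, 0],
        by ext i j; fin_cases i <;> fin_cases j <;>
          simp [Matrix.mul_apply, Fin.sum_univ_two, Matrix.one_apply],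
        by ext i j; fin_cases i <;> fin_cases j <;>
          simp [Matrix.mul_apply, Fin.sum_univ_two, Matrix.one_apply]⟩
    have hinv : ⅟(!![0, -1; 1, 0] : Matrix (Fin 2) (Fin 2) ℤ) = !![0, 1; -1, 0] := rfl
    have hsub : (Matrix.of fun i j : Fin ((c + 1) + (c + 1)) =>
          mfun (i : ℕ) (j : ℕ)).submatrix (blockEquiv c) (blockEquiv c)
        = Matrix.fromBlocks !![0, -1; 1, 0]
            (Matrix.of fun (_ : Fin 2) (_ : Fin (c + c)) => (-1 : ℤ))
            (Matrix.of fun (_ : Fin (c + c)) (_ : Fin 2) => (1 : ℤ))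
            (Matrix.of fun i j : Fin (c + c) => mfun (i : ℕ) (j : ℕ)) := by
      ext i j
      rcases i with i | i <;> rcases j with j | j <;>
        simp only [Matrix.submatrix_apply, blockEquiv_inl, blockEquiv_inr,
          Matrix.of_apply, Matrix.fromBlocks_apply₁₁, Matrix.fromBlocks_apply₁₂,
          Matrix.fromBlocks_apply₂₁, Matrix.fromBlocks_apply₂₂]
      · fin_cases i <;> fin_cases j <;> decide
      · rw [mfun, if_pos (by omega)]
      · rw [mfun, if_neg (by omega), if_neg (by omega)]
      · simp only [mfun, Nat.add_lt_add_iff_left, Nat.add_right_inj]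
    have hzero : (Matrix.of fun (_ : Fin (c + c)) (_ : Fin 2) => (1 : ℤ))
          * (!![0, 1; -1, 0] : Matrix (Fin 2) (Fin 2) ℤ)
          * (Matrix.of fun (_ : Fin 2) (_ : Fin (c + c)) => (-1 : ℤ)) = 0 := by
      ext i j
      simp [Matrix.mul_apply, Fin.sum_univ_two]
    rw [← Matrix.det_submatrix_equiv_self (blockEquiv c), hsub,
      Matrix.det_fromBlocks₁₁, hinv, hzero, sub_zero, ih]
    norm_num [Matrix.det_fin_two_of]

theorem kac_ward_cluster_matrix_inverse (n : ℕ) (hn : 0 < n) (hne : Even n)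
    (L M : Matrix (Fin n) (Fin n) ℤ)
    (hL : ∀ i j : Fin n, L i j =
      if i = j then 0
      else if (i : ℕ) < (j : ℕ) then (-1 : ℤ) ^ ((i : ℕ) + (j : ℕ) + 1)
      else (-1 : ℤ) ^ ((i : ℕ) + (j : ℕ)))
    (hM : ∀ i j : Fin n, M i j =
      if (i : ℕ) < (j : ℕ) then -1 else if i = j then 0 else 1) :
    L.det = 1 ∧ L * M = 1 ∧ M * L = 1 := by
  have hMeq : M = Matrix.of fun i j : Fin n => mfun (i : ℕ) (j : ℕ) := by
    ext i j
    rw [hM]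
    simp only [Matrix.of_apply, mfun, Fin.ext_iff]
  have hLeq : ∀ i j : Fin n, L i j = lfun (i : ℕ) (j : ℕ) := by
    intro i j
    rw [hL]
    simp only [lfun, Fin.ext_iff]
  have hML : M * L = 1 := by
    ext i j
    rw [Matrix.mul_apply, Matrix.one_apply]
    have : ∀ k : Fin n, M i k * L k j = mfun (i : ℕ) (k : ℕ) * lfun (k : ℕ) (j : ℕ) := by
      intro k
      rw [hMeq, hLeq]
      rfl
    rw [Finset.sum_congr rfl fun k _ => this k]
    rw [Fin.sum_univ_eq_sum_range (fun k => mfun (i : ℕ) k * lfun k (j : ℕ)) n]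
    rcases lt_trichotomy (i : ℕ) (j : ℕ) with h | h | h
    · rw [key_lt n i j hne j.isLt h, if_neg (by simp [Fin.ext_iff]; omega)]
    · have hij : i = j := Fin.ext h
      rw [hij, key_diag n j hne j.isLt, if_pos rfl]
    · rw [key_gt n i j hne i.isLt h, if_neg (by simp [Fin.ext_iff]; omega)]
  have hLM : L * M = 1 := mul_eq_one_comm.mp hML
  have hMdet : M.det = 1 := by
    obtain ⟨c, rfl⟩ := hne
    rw [hMeq]
    exact detM_aux c
  have hLdet : L.det = 1 := by
    have h := congrArg Matrix.det hLM
    rw [Matrix.det_mul, Matrix.det_one, hMdet, mul_one] at h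
    exact h
  exact ⟨hLdet, hLM, hML⟩
end
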